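/- For any countable collection of maps S_i : [0,1] → [0,1] of the form S_i(x) = c_i x + p_i with c_i > 0, p_i ≥ 0 and p_i + c_i ≤ 1, if the limit set F (the set of points of the form lim_n S_{w_1}∘⋯∘S_{w_n}(0) over infinite words w) contains, for every θ ∈ (0,1) and all sufficiently large i, the property that F ∩ (p_i − r^θ/2, p_i + r^θ/2) ⊆ S_i([0,1]) where r is the size of S_i([0,1]), then a ball of radius r^θ around p_i meets F in a set covered by one interval of length r. In particular, for the system S_i(x) = 2^{−i} x + i^{−1} (i ≥ 2): for every θ ∈ (0,1) there exists i₀ such that for all i ≥ i₀, N_{2^{−i}}( F ∩ (i^{−1} − 2^{−iθ}/2, i^{−1} + 2^{−iθ}/2) ) = 1, where N_r denotes the smallest number of intervals of length 2r needed to cover the set. -/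

import Mathlib

/-!
Every point of `F` lies in the first-level cylinder `S_j([0,1]) = [1/j, 1/j + 2^{-j}]` of the
first letter `j` of one of its codings. The cylinders sit at the points `1/j`, whose spacing
`≍ j^{-2}` decays only polynomially, while the window `(1/i - 2^{-iθ}/2, 1/i + 2^{-iθ}/2)` and
the cylinder lengths `2^{-j}` shrink exponentially. So for large `i` the window meets no cylinder
but the `i`-th one, which it contains; this cylinder has length `2^{-i}`, so one ball of radius
`2^{-i}` covers the window's part of `F`, and the fixed point of `S_i` shows that it is nonempty.
-/

/-- The similarity maps `S_i(x) = 2^{-i} x + i⁻¹` of the CIFS. -/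
noncomputable def S15 (i : ℕ) (x : ℝ) : ℝ := ((2 : ℝ) ^ i)⁻¹ * x + (i : ℝ)⁻¹

/-- `prefixMap w n = S_{w 0} ∘ S_{w 1} ∘ ⋯ ∘ S_{w (n-1)}`. -/
noncomputable def prefixMap15 (w : ℕ → ℕ) : ℕ → ℝ → ℝ
  | 0 => id
  | n + 1 => fun x => prefixMap15 w n (S15 (w n) x)

/-- The limit set of the CIFS `{S_i : i ≥ 2}`. -/
noncomputable def F15 : Set ℝ :=
  {x | ∃ w : ℕ → ℕ, (∀ n, 2 ≤ w n) ∧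
    Filter.Tendsto (fun n => prefixMap15 w n 0) Filter.atTop (nhds x)}

/-- `covNum r E`: the smallest number of intervals of length `2r`
(i.e. balls of radius `r`) needed to cover `E`. -/
noncomputable def covNum15 (r : ℝ) (E : Set ℝ) : ℕ :=
  sInf {m : ℕ | ∃ c : Fin m → ℝ, E ⊆ ⋃ j, Metric.ball (c j) r}

open Set Filter Topology

def cylinder15 (j : ℕ) : Set ℝ := Icc (j : ℝ)⁻¹ ((j : ℝ)⁻¹ + ((2 : ℝ) ^ j)⁻¹)

lemma S15_mapsTo_cylinder15 (j : ℕ) : MapsTo (S15 j) (Icc 0 1) (cylinder15 j) := by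
  rintro x ⟨hx0, hx1⟩
  have hr : (0 : ℝ) < ((2 : ℝ) ^ j)⁻¹ := by positivity
  constructor <;> simp only [S15] <;> nlinarith

lemma cylinder15_subset_Icc {j : ℕ} (hj : 2 ≤ j) : cylinder15 j ⊆ Icc 0 1 := by
  have hinv : (j : ℝ)⁻¹ ≤ 2⁻¹ := inv_anti₀ two_pos (by exact_mod_cast hj)
  have hpow : ((2 : ℝ) ^ j)⁻¹ ≤ 2⁻¹ :=
    inv_anti₀ two_pos (le_self_pow₀ one_le_two (by omega))
  exact Icc_subset_Icc (by positivity) (by linarith)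

lemma prefixMap15_succ_mapsTo_cylinder15 {w : ℕ → ℕ} (hw : ∀ n, 2 ≤ w n) (n : ℕ) :
    MapsTo (prefixMap15 w (n + 1)) (Icc 0 1) (cylinder15 (w 0)) := by
  induction n with
  | zero => exact S15_mapsTo_cylinder15 (w 0)
  | succ n ih => exact fun x hx => ih (cylinder15_subset_Icc (hw _) (S15_mapsTo_cylinder15 _ hx))

lemma mem_cylinder15_of_tendsto {w : ℕ → ℕ} (hw : ∀ n, 2 ≤ w n) {x : ℝ}
    (hx : Tendsto (fun n => prefixMap15 w n 0) atTop (𝓝 x)) : x ∈ cylinder15 (w 0) :=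
  isClosed_Icc.mem_of_tendsto ((tendsto_add_atTop_iff_nat 1).2 hx) <|
    Eventually.of_forall fun n => prefixMap15_succ_mapsTo_cylinder15 hw n ⟨le_rfl, zero_le_one⟩

lemma prefixMap15_const (i : ℕ) : ∀ n, prefixMap15 (fun _ => i) n = (S15 i)^[n]
  | 0 => rfl
  | n + 1 => funext fun x => congrFun (prefixMap15_const i n) (S15 i x)

lemma contractingWith_S15 {i : ℕ} (hi : 1 ≤ i) : ContractingWith ((2 : NNReal) ^ i)⁻¹ (S15 i) := by
  refine ⟨inv_lt_one_of_one_lt₀ (one_lt_pow₀ one_lt_two (by omega)), ?_⟩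
  refine LipschitzWith.of_dist_le_mul fun x y => le_of_eq ?_
  simp only [S15, Real.dist_eq, add_sub_add_right_eq_sub, ← mul_sub, abs_mul, NNReal.coe_inv,
    NNReal.coe_pow, NNReal.coe_ofNat]
  rw [abs_of_pos (by positivity)]

lemma F15_inter_cylinder15_nonempty {i : ℕ} (hi : 2 ≤ i) : (F15 ∩ cylinder15 i).Nonempty := by
  have hS := contractingWith_S15 (by omega : 1 ≤ i)
  have hlim : Tendsto (fun n => prefixMap15 (fun _ => i) n 0) atTop
      (𝓝 (ContractingWith.fixedPoint (S15 i) hS)) := by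
    simpa only [prefixMap15_const] using hS.tendsto_iterate_fixedPoint 0
  exact ⟨_, ⟨fun _ => i, fun _ => hi, hlim⟩, mem_cylinder15_of_tendsto (fun _ => hi) hlim⟩

lemma inv_add_inv_sq_le_inv {i j : ℕ} (hj : 0 < j) (hji : j < i) :
    (i : ℝ)⁻¹ + ((i : ℝ) ^ 2)⁻¹ ≤ (j : ℝ)⁻¹ := by
  have hj' : (0 : ℝ) < j := by exact_mod_cast hj
  have hji' : (j : ℝ) + 1 ≤ i := by exact_mod_cast hji
  have hi' : (0 : ℝ) < i := by linarith
  rw [← one_div, ← one_div, ← one_div, div_add_div _ _ (by positivity) (by positivity),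
    div_le_div_iff₀ (by positivity) hj']
  nlinarith

lemma inv_add_inv_two_pow_le {i j : ℕ} (hi : 0 < i) (hij : i < j) :
    (j : ℝ)⁻¹ + ((2 : ℝ) ^ j)⁻¹ ≤ (i : ℝ)⁻¹ - ((i : ℝ) ^ 2)⁻¹ / 2 + ((2 : ℝ) ^ i)⁻¹ / 2 := by
  have hi' : (1 : ℝ) ≤ i := by exact_mod_cast hi
  have hinv : (j : ℝ)⁻¹ ≤ ((i : ℝ) + 1)⁻¹ := inv_anti₀ (by positivity) (by exact_mod_cast hij)
  have hpow : ((2 : ℝ) ^ j)⁻¹ ≤ ((2 : ℝ) ^ i)⁻¹ / 2 := by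
    rw [div_eq_mul_inv, ← mul_inv, ← pow_succ]
    exact inv_anti₀ (by positivity) (pow_le_pow_right₀ one_le_two hij)
  have hgap : ((i : ℝ) + 1)⁻¹ ≤ (i : ℝ)⁻¹ - ((i : ℝ) ^ 2)⁻¹ / 2 := by
    rw [inv_le_iff_one_le_mul₀ (by positivity)]
    field_simp
    nlinarith
  linarith

section Window

variable {i : ℕ} {D : ℝ}

lemma eq_of_mem_cylinder15_of_mem_window {j : ℕ} {x : ℝ} (hi : 0 < i) (hj : 0 < j)
    (hrD : ((2 : ℝ) ^ i)⁻¹ < D) (hD : D ≤ ((i : ℝ) ^ 2)⁻¹ / 4) (hxC : x ∈ cylinder15 j)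
    (hxW : x ∈ Ioo ((i : ℝ)⁻¹ - D) ((i : ℝ)⁻¹ + D)) : j = i := by
  have hsq : (0 : ℝ) < ((i : ℝ) ^ 2)⁻¹ := by positivity
  rcases lt_trichotomy j i with hji | rfl | hij
  · linarith [inv_add_inv_sq_le_inv hj hji, hxC.1, hxW.2]
  · rfl
  · linarith [inv_add_inv_two_pow_le hi hij, hxC.2, hxW.1]

lemma F15_inter_window_subset_cylinder15 (hi : 0 < i) (hrD : ((2 : ℝ) ^ i)⁻¹ < D)
    (hD : D ≤ ((i : ℝ) ^ 2)⁻¹ / 4) :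
    F15 ∩ Ioo ((i : ℝ)⁻¹ - D) ((i : ℝ)⁻¹ + D) ⊆ cylinder15 i := by
  rintro x ⟨⟨w, hw, hx⟩, hxW⟩
  have hxC := mem_cylinder15_of_tendsto hw hx
  rwa [eq_of_mem_cylinder15_of_mem_window hi (by linarith [hw 0]) hrD hD hxC hxW] at hxC

lemma cylinder15_subset_window (hrD : ((2 : ℝ) ^ i)⁻¹ < D) :
    cylinder15 i ⊆ Ioo ((i : ℝ)⁻¹ - D) ((i : ℝ)⁻¹ + D) :=
  Icc_subset_Ioo (by linarith [(by positivity : (0 : ℝ) < ((2 : ℝ) ^ i)⁻¹)]) (by linarith)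

end Window

lemma Icc_subset_ball_add_half {a r : ℝ} (hr : 0 < r) :
    Icc a (a + r) ⊆ Metric.ball (a + r / 2) r := by
  rw [Real.ball_eq_Ioo]
  exact Icc_subset_Ioo (by linarith) (by linarith)

lemma covNum15_eq_one {E : Set ℝ} {c r : ℝ} (hne : E.Nonempty) (hE : E ⊆ Metric.ball c r) :
    covNum15 r E = 1 := by
  have hone : 1 ∈ {m : ℕ | ∃ c : Fin m → ℝ, E ⊆ ⋃ j, Metric.ball (c j) r} :=
    ⟨fun _ => c, by simpa only [iUnion_const] using hE⟩
  refine le_antisymm (Nat.sInf_le hone) (le_csInf ⟨1, hone⟩ ?_)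
  rintro m ⟨cs, hcs⟩
  obtain ⟨x, hx⟩ := hne
  obtain ⟨j, -⟩ := mem_iUnion.1 (hcs hx)
  exact j.pos

lemma eventually_window_bounds {θ : ℝ} (hθ : θ ∈ Ioo (0 : ℝ) 1) :
    ∀ᶠ i : ℕ in atTop, ((2 : ℝ) ^ i)⁻¹ < (2 : ℝ) ^ (-(i : ℝ) * θ) / 2 ∧
      (2 : ℝ) ^ (-(i : ℝ) * θ) / 2 ≤ ((i : ℝ) ^ 2)⁻¹ / 4 := by
  obtain ⟨hθ0, hθ1⟩ := hθ
  set b : ℝ := 2 ^ θ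
  set c : ℝ := 2 ^ (1 - θ)
  have hb : 1 < b := Real.one_lt_rpow one_lt_two hθ0
  have hc : 1 < c := Real.one_lt_rpow one_lt_two (by linarith)
  have hbc : b * c = 2 := by rw [← Real.rpow_add two_pos, add_sub_cancel, Real.rpow_one]
  have hc_large : ∀ᶠ i : ℕ in atTop, 2 < c ^ i :=
    (tendsto_pow_atTop_atTop_of_one_lt hc).eventually_gt_atTop 2
  have hb_large : ∀ᶠ i : ℕ in atTop, (i : ℝ) ^ 2 / b ^ i < 2⁻¹ :=
    (tendsto_pow_const_div_const_pow_of_one_lt 2 hb).eventually (gt_mem_nhds (by norm_num))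
  filter_upwards [hc_large, hb_large] with i hci hbi
  have hbi0 : 0 < b ^ i := by positivity
  rw [div_lt_iff₀ hbi0] at hbi
  have hδ : (2 : ℝ) ^ (-(i : ℝ) * θ) / 2 = (2 * b ^ i)⁻¹ := by
    rw [neg_mul, Real.rpow_neg zero_le_two, mul_comm, Real.rpow_mul zero_le_two,
      Real.rpow_natCast, mul_inv, div_eq_mul_inv, mul_comm]
  rw [hδ]
  constructor
  · calc ((2 : ℝ) ^ i)⁻¹ = (b ^ i * c ^ i)⁻¹ := by rw [← mul_pow, hbc]
      _ < (2 * b ^ i)⁻¹ := inv_strictAnti₀ (by positivity) (by nlinarith)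
  · have hi : i ≠ 0 := by rintro rfl; norm_num at hci
    calc (2 * b ^ i)⁻¹ ≤ (4 * (i : ℝ) ^ 2)⁻¹ := inv_anti₀ (by positivity) (by linarith)
      _ = ((i : ℝ) ^ 2)⁻¹ / 4 := by rw [mul_inv, div_eq_mul_inv, mul_comm]

theorem stmt15 :
    ∀ θ ∈ Set.Ioo (0 : ℝ) 1, ∃ i₀ : ℕ, ∀ i : ℕ, i₀ ≤ i →
      covNum15 ((2 : ℝ) ^ (-(i : ℝ)))
        (F15 ∩ Set.Ioo ((i : ℝ)⁻¹ - (2 : ℝ) ^ (-(i : ℝ) * θ) / 2)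
          ((i : ℝ)⁻¹ + (2 : ℝ) ^ (-(i : ℝ) * θ) / 2)) = 1 := by
  intro θ hθ
  obtain ⟨i₀, hi₀⟩ :=
    eventually_atTop.1 ((eventually_ge_atTop 2).and (eventually_window_bounds hθ))
  refine ⟨i₀, fun i hi => ?_⟩
  obtain ⟨hi2, hrD, hD⟩ := hi₀ i hi
  rw [Real.rpow_neg zero_le_two, Real.rpow_natCast]
  obtain ⟨x, hxF, hxC⟩ := F15_inter_cylinder15_nonempty hi2
  exact covNum15_eq_one ⟨x, hxF, cylinder15_subset_window hrD hxC⟩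
    ((F15_inter_window_subset_cylinder15 (by omega) hrD hD).trans (Icc_subset_ball_add_half (by positivity)))
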